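/- arXiv:1109.5877 — 2 statements merged into one kernel-verified Lean document; each statement's English description precedes it below -/
import Mathlib

section
/- Extension of the graded determinant to nonzero even degrees (Proposition): Assume n ≥ 3, A is nontrivial (1 ≠ 0), all values of w : Fin N → Γ are even, every homogeneous component 𝒜 γ with γ even contains an element invertible in A, and let D : M⁰(w) → 𝒜 0 satisfy the graded-determinant axioms. (a) [Well-definedness] If γ ∈ Γ is even, q and q' are invertible elements of 𝒜 γ, and X₀, X₀' ∈ M⁰(w) satisfy q • X₀ = q' • X₀' (twisted action), then q^N * D(X₀) = q'^N * D(X₀'); hence for every X ∈ M^γ(w) one may set D_γ(X) := q^N * D(X₀) for any invertible q ∈ 𝒜 γ and the unique X₀ ∈ M⁰(w) with X = q • X₀ (namely X₀ = q⁻¹ • X, where q⁻¹ ∈ 𝒜 γ automatically). (b) The extended determinant is multiplicative — i.e. D_{γ+δ}(X * Y) = D_γ(X) * D_δ(Y) for all even γ, δ ∈ Γ, all X ∈ M^γ(w) and all Y ∈ M^δ(w) — if and only if N % 4 = 0 or N % 4 = 1. -/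
open Matrix

abbrev Gamma (n : ℕ) := Fin n → ZMod 2

def gpair {n : ℕ} (γ δ : Gamma n) : ZMod 2 := ∑ i, γ i * δ i

def gsign {n : ℕ} (γ δ : Gamma n) : ℤ := if gpair γ δ = 1 then -1 else 1

def GammaEven {n : ℕ} (γ : Gamma n) : Prop := gpair γ γ = 0

instance {n : ℕ} : DecidablePred (GammaEven (n := n)) := fun γ =>
  inferInstanceAs (Decidable (gpair γ γ = 0))

/-- `Γ`-graded commutativity of the graded algebra `A`:
`b * a = sign(γ,δ) • (a * b)` for homogeneous `a, b`. -/
def GradedComm {n : ℕ} {K A : Type*} [Field K] [Ring A] [Algebra K A]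
    (𝒜 : Gamma n → Submodule K A) : Prop :=
  ∀ (γ δ : Gamma n) (a b : A), a ∈ 𝒜 γ → b ∈ 𝒜 δ → b * a = gsign γ δ • (a * b)

/-- `X ∈ M^x(w)` : the matrix `X` is homogeneous of degree `x` w.r.t. the weight map `w`. -/
def Mdeg {n : ℕ} {K A : Type*} [Field K] [Ring A] [Algebra K A]
    (𝒜 : Gamma n → Submodule K A) {ι : Type*} (w : ι → Gamma n) (x : Gamma n)
    (X : Matrix ι ι A) : Prop :=
  ∀ α β, X α β ∈ 𝒜 (w α + w β + x)

/-- `X ∈ M⁰(w)` : the matrix `X` is homogeneous of degree `0` w.r.t. the weight map `w`. -/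
def Mdeg0 {n : ℕ} {K A : Type*} [Field K] [Ring A] [Algebra K A]
    (𝒜 : Gamma n → Submodule K A) {ι : Type*} (w : ι → Gamma n)
    (X : Matrix ι ι A) : Prop :=
  ∀ α β, X α β ∈ 𝒜 (w α + w β)

/-- Twisted scalar action of a homogeneous element `a` of degree `γ` on matrices:
`(a • X) α β = sign(γ, w α) • (a * X α β)`. -/
def twist {n : ℕ} {ι : Type*} {A : Type*} [Ring A] (w : ι → Gamma n) (γ : Gamma n) (a : A)
    (X : Matrix ι ι A) : Matrix ι ι A :=
  Matrix.of fun α β => gsign γ (w α) • (a * X α β)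

/-- Leibniz determinant over a (not necessarily commutative) ring, with the product
taken in the order given by the linear order on the index type. -/
def listDet {ι : Type*} [Fintype ι] [LinearOrder ι] {A : Type*} [Ring A]
    (X : Matrix ι ι A) : A :=
  ∑ σ : Equiv.Perm ι, (Equiv.Perm.sign σ : ℤ) •
    ((Finset.sort Finset.univ (· ≤ ·)).map fun i => X (σ i) i).prod

/-- The product over the values `γ` in the range of `v` (ordered by `lo`) of the ordinary
determinants of the diagonal blocks `{α | v α = γ}` of `X`. -/
def detProd {n : ℕ} (lo : LinearOrder (Gamma n)) {ι : Type*} [Fintype ι] [LinearOrder ι]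
    {A : Type*} [Ring A] (v : ι → Gamma n) (X : Matrix ι ι A) : A :=
  letI : LinearOrder (Gamma n) := lo
  ((Finset.sort (Finset.image v Finset.univ) (· ≤ ·)).map fun γ =>
    listDet (Matrix.of fun a b : {α : ι // v α = γ} => X a.1 b.1)).prod

/-- The graded-determinant axioms for a map `D` on degree-zero graded matrices with weight
map `v` and a fixed linear order `lo` on `Γ`: `D` is valued in `𝒜 0`, is multiplicative,
equals the product of the ordinary block determinants on block-diagonal matrices, and
equals `1` on block-unitriangular matrices. -/
def DetAxioms {n : ℕ} {K A : Type*} [Field K] [Ring A] [Algebra K A]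
    (𝒜 : Gamma n → Submodule K A) (lo : LinearOrder (Gamma n))
    {ι : Type*} [Fintype ι] [LinearOrder ι] (v : ι → Gamma n)
    (D : Matrix ι ι A → A) : Prop :=
  (∀ X, Mdeg0 𝒜 v X → D X ∈ 𝒜 0) ∧
  (∀ X Y, Mdeg0 𝒜 v X → Mdeg0 𝒜 v Y → D (X * Y) = D X * D Y) ∧
  (∀ X, Mdeg0 𝒜 v X → (∀ α β, v α ≠ v β → X α β = 0) → D X = detProd lo v X) ∧
  (∀ X, Mdeg0 𝒜 v X → (∀ α β, v α = v β → X α β = if α = β then (1 : A) else 0) →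
    ((∀ α β, lo.lt (v α) (v β) → X α β = 0) ∨ (∀ α β, lo.lt (v β) (v α) → X α β = 0)) →
    D X = 1)

/-!
If `q • X₀ = q' • X₀'`, then `X₀' = u X₀` for the degree-zero element `u = q'⁻¹ q`, which
commutes with homogeneous elements; the block-diagonal axiom gives `D (diagonal u) = u ^ N`, hence
`q' ^ N * D X₀' = (q' u) ^ N * D X₀ = q ^ N * D X₀`.

For products, `(q • X₀) * (q' • Y₀) = (q q') • (X₀ Y₀)`, so multiplicativity of the extension
amounts to `(q q') ^ N = q ^ N * q' ^ N`. Homogeneous `q, q'` commute up to the sign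
`s = sign(γ, δ)`, so `(q q') ^ N = s ^ (N choose 2) • q ^ N * q' ^ N`. Now `N choose 2` is even
exactly when `N % 4 ∈ {0, 1}`, and for `n ≥ 3` there are even `γ, δ` with `sign(γ, δ) = -1`,
for which an odd exponent would force `2 = 0` in `A`.
-/

section Signs

variable {n : ℕ}

lemma gpair_comm (γ δ : Gamma n) : gpair γ δ = gpair δ γ := by
  simp [gpair, mul_comm]

lemma gpair_add_left (γ δ ε : Gamma n) : gpair (γ + δ) ε = gpair γ ε + gpair δ ε := by
  simp [gpair, add_mul, Finset.sum_add_distrib]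

lemma gpair_single_left (i : Fin n) (δ : Gamma n) : gpair (Pi.single i 1) δ = δ i := by
  simp [gpair, Pi.single_apply]

lemma gamma_add_self (γ : Gamma n) : γ + γ = 0 :=
  funext fun i => CharTwo.add_self_eq_zero (γ i)

lemma exists_gammaEven_gpair_eq_one (hn : 3 ≤ n) :
    ∃ γ δ : Gamma n, GammaEven γ ∧ GammaEven δ ∧ gpair γ δ = 1 :=
  ⟨Pi.single ⟨0, by omega⟩ 1 + Pi.single ⟨1, by omega⟩ 1,
    Pi.single ⟨1, by omega⟩ 1 + Pi.single ⟨2, by omega⟩ 1, by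
      refine ⟨?_, ?_, ?_⟩ <;>
        simp [GammaEven, gpair_add_left, gpair_single_left, Fin.ext_iff] <;> decide⟩

lemma gsign_add_left (γ δ ε : Gamma n) : gsign (γ + δ) ε = gsign γ ε * gsign δ ε := by
  simp only [gsign, gpair_add_left]
  generalize gpair γ ε = x
  generalize gpair δ ε = y
  revert x y
  decide

lemma gsign_comm (γ δ : Gamma n) : gsign γ δ = gsign δ γ := by
  simp [gsign, gpair_comm]

lemma gsign_zero_left (δ : Gamma n) : gsign 0 δ = 1 := by
  simp [gsign, gpair]

lemma gsign_of_gpair_eq_one {γ δ : Gamma n} (h : gpair γ δ = 1) : gsign γ δ = -1 :=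
  if_pos h

lemma gsign_mul_self (γ δ : Gamma n) : gsign γ δ * gsign γ δ = 1 := by
  unfold gsign; split_ifs <;> norm_num

lemma gsign_pow_of_even (γ δ : Gamma n) {k : ℕ} (hk : Even k) : gsign γ δ ^ k = 1 := by
  obtain ⟨j, rfl⟩ := hk
  rw [pow_add, ← mul_pow, gsign_mul_self, one_pow]

lemma gsign_smul_injective {A : Type*} [AddCommGroup A] (γ δ : Gamma n) :
    Function.Injective (gsign γ δ • · : A → A) := fun a b h => by
  simpa [smul_smul, gsign_mul_self] using congrArg (gsign γ δ • ·) h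

end Signs

lemma Nat.even_choose_two_iff (m : ℕ) : Even (m.choose 2) ↔ m % 4 = 0 ∨ m % 4 = 1 := by
  induction m with
  | zero => simp
  | succ m ih =>
    rw [Nat.choose_succ_succ', Nat.choose_one_right, Nat.even_add, ih, Nat.even_iff]
    omega

section SignCommute

variable {R : Type*} [Ring R] {ε : ℤ} {a b : R}

lemma pow_mul_eq_zsmul_mul_pow (h : b * a = ε • (a * b)) (k : ℕ) :
    b ^ k * a = ε ^ k • (a * b ^ k) := by
  induction k with
  | zero => simp
  | succ k ih =>
    rw [pow_succ', mul_assoc, ih, mul_smul_comm, ← mul_assoc, h, smul_mul_assoc, smul_smul,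
      mul_assoc, ← pow_succ, pow_succ']

lemma mul_pow_eq_zsmul_pow_mul_pow (h : b * a = ε • (a * b)) (m : ℕ) :
    (a * b) ^ m = ε ^ m.choose 2 • (a ^ m * b ^ m) := by
  induction m with
  | zero => simp
  | succ m ih =>
    calc (a * b) ^ (m + 1) = ε ^ m.choose 2 • (a ^ m * (b ^ m * a) * b) := by
          rw [pow_succ, ih, smul_mul_assoc]; noncomm_ring
      _ = ε ^ (m + 1).choose 2 • (a ^ (m + 1) * b ^ (m + 1)) := by
          rw [pow_mul_eq_zsmul_mul_pow h, Nat.choose_succ_succ', Nat.choose_one_right, pow_add,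
            mul_comm (ε ^ m), mul_smul, mul_smul_comm, smul_mul_assoc, pow_succ, pow_succ]
          noncomm_ring

lemma even_choose_two_of_mul_pow_eq [CharZero R] (ha : IsUnit a) (hb : IsUnit b)
    (hab : b * a = -(a * b)) {m : ℕ} (h : (a * b) ^ m = a ^ m * b ^ m) : Even (m.choose 2) := by
  by_contra hodd
  rw [mul_pow_eq_zsmul_pow_mul_pow (ε := -1) (by rw [hab, neg_one_zsmul]),
    (Nat.not_even_iff_odd.1 hodd).neg_one_pow, neg_one_zsmul, neg_eq_iff_add_eq_zero,
    ← two_mul, ((ha.pow m).mul (hb.pow m)).mul_left_eq_zero] at h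
  exact two_ne_zero h

end SignCommute

lemma SetLike.mem_of_isUnit_mul_mem {ι R σ : Type*} [DecidableEq ι] [AddLeftCancelMonoid ι]
    [Semiring R] [SetLike σ R] [AddSubmonoidClass σ R] {𝒜 : ι → σ} [GradedRing 𝒜] {i j : ι}
    {a b : R} (ha : a ∈ 𝒜 i) (hu : IsUnit a) (hab : a * b ∈ 𝒜 (i + j)) : b ∈ 𝒜 j := by
  have : a * b = a * DirectSum.decompose 𝒜 b j := by
    rw [← DirectSum.coe_decompose_mul_add_of_left_mem 𝒜 ha,
      DirectSum.decompose_of_mem_same 𝒜 hab]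
  rw [hu.mul_left_cancel this]
  exact SetLike.coe_mem _

section Graded

variable {n : ℕ} {K A : Type*} [Field K] [Ring A] [Algebra K A] {𝒜 : Gamma n → Submodule K A}

lemma GradedComm.commute_of_mem_zero (hcomm : GradedComm 𝒜) {δ : Gamma n} {a b : A}
    (ha : a ∈ 𝒜 0) (hb : b ∈ 𝒜 δ) : Commute a b := by
  rw [Commute, SemiconjBy, hcomm 0 δ a b ha hb, gsign_zero_left, one_smul]

lemma GradedComm.mul_pow (hcomm : GradedComm 𝒜) {γ δ : Gamma n} {a b : A} (ha : a ∈ 𝒜 γ)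
    (hb : b ∈ 𝒜 δ) (m : ℕ) : (a * b) ^ m = gsign γ δ ^ m.choose 2 • (a ^ m * b ^ m) :=
  mul_pow_eq_zsmul_pow_mul_pow (hcomm γ δ a b ha hb) m

variable {ι : Type*} (w : ι → Gamma n)

lemma twist_mul [Fintype ι] (hcomm : GradedComm 𝒜) {γ δ : Gamma n} (q : A) {q' : A}
    (hq' : q' ∈ 𝒜 δ) {X : Matrix ι ι A} (hX : Mdeg0 𝒜 w X) (Y : Matrix ι ι A) :
    twist w γ q X * twist w δ q' Y = twist w (γ + δ) (q * q') (X * Y) := by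
  ext α β
  simp only [twist, Matrix.mul_apply, Matrix.of_apply, Finset.mul_sum, Finset.smul_sum]
  refine Finset.sum_congr rfl fun k _ => ?_
  have hc := hcomm (w α + w k) δ (X α k) q' (hX α k) hq'
  rw [smul_mul_assoc, mul_smul_comm, smul_smul,
    show q * q' * (X α k * Y k β) = q * (q' * X α k) * Y k β by noncomm_ring,
    hc, mul_smul_comm, smul_mul_assoc, smul_smul,
    show q * (X α k * q') * Y k β = q * X α k * (q' * Y k β) by noncomm_ring,
    gsign_add_left, gsign_add_left, gsign_comm (w α) δ, gsign_comm (w k) δ]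
  congr 1
  linear_combination (-(gsign γ (w α) * gsign δ (w k))) * gsign_mul_self δ (w α)

lemma mul_apply_eq_of_twist_eq {γ : Gamma n} {q q' : A} {X X' : Matrix ι ι A}
    (h : twist w γ q X = twist w γ q' X') (α β : ι) : q * X α β = q' * X' α β :=
  gsign_smul_injective γ (w α) (congr_fun (congr_fun h α) β)

variable {w}

lemma Mdeg0_diagonal [DecidableEq ι] {d : ι → A} (hd : ∀ i, d i ∈ 𝒜 0) :
    Mdeg0 𝒜 w (Matrix.diagonal d) := by
  intro α β
  by_cases h : α = β
  · subst h
    simpa [gamma_add_self] using hd α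
  · simp [h]

variable [GradedAlgebra 𝒜]

lemma Mdeg0_one [DecidableEq ι] : Mdeg0 𝒜 w (1 : Matrix ι ι A) := by
  rw [← Matrix.diagonal_one]
  exact Mdeg0_diagonal fun _ => SetLike.one_mem_graded 𝒜

lemma Mdeg0.mul [Fintype ι] {X Y : Matrix ι ι A} (hX : Mdeg0 𝒜 w X) (hY : Mdeg0 𝒜 w Y) :
    Mdeg0 𝒜 w (X * Y) := fun α β =>
  Submodule.sum_mem _ fun k _ => by
    have e : w α + w k + (w k + w β) = w α + w β := by
      rw [add_assoc, ← add_assoc (w k), gamma_add_self, zero_add]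
    exact e ▸ SetLike.mul_mem_graded (hX α k) (hY k β)

end Graded

lemma List.prod_map_pow_eq_pow_sum {β M : Type*} [Monoid M] (u : M) (c : β → ℕ) (l : List β) :
    (l.map fun b => u ^ c b).prod = u ^ (l.map c).sum := by
  induction l with
  | nil => simp
  | cons b l ih => simp [ih, pow_add]

section Determinant

variable {ι A : Type*} [Fintype ι] [LinearOrder ι] [Ring A]

lemma listDet_diagonal (d : ι → A) :
    listDet (Matrix.diagonal d) = ((Finset.sort Finset.univ (· ≤ ·)).map d).prod := by
  rw [listDet, Finset.sum_eq_single (1 : Equiv.Perm ι)]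
  · simp
  · intro σ _ hσ
    obtain ⟨i, hi⟩ : ∃ i, σ i ≠ i := not_forall.1 fun h => hσ (Equiv.ext h)
    refine smul_eq_zero_of_right _ (List.prod_eq_zero (List.mem_map.2 ⟨i, ?_,
      Matrix.diagonal_apply_ne d hi⟩))
    exact (Finset.mem_sort _).2 (Finset.mem_univ i)
  · simp

lemma listDet_diagonal_const (u : A) :
    listDet (Matrix.diagonal fun _ : ι => u) = u ^ Fintype.card ι := by
  rw [listDet_diagonal, List.map_const', List.prod_replicate, Finset.length_sort,
    Finset.card_univ]

lemma detProd_diagonal_const {n : ℕ} (lo : LinearOrder (Gamma n)) (v : ι → Gamma n) (u : A) :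
    detProd lo v (Matrix.diagonal fun _ => u) = u ^ Fintype.card ι := by
  let := lo
  have hblock (γ : Gamma n) :
      listDet (Matrix.of fun a b : {α // v α = γ} => Matrix.diagonal (fun _ => u) a.1 b.1)
        = u ^ Fintype.card {α // v α = γ} := by
    rw [← listDet_diagonal_const]
    exact congrArg listDet (Matrix.submatrix_diagonal _ _ Subtype.val_injective)
  rw [detProd, List.map_congr_left fun γ _ => hblock γ, List.prod_map_pow_eq_pow_sum,
    ((Finset.sort_perm_toList _ _).map _).sum_eq, Finset.sum_map_toList]
  simp_rw [Fintype.card_subtype]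
  rw [← Finset.card_eq_sum_card_image, Finset.card_univ]

end Determinant

namespace DetAxioms

variable {n : ℕ} {K A : Type*} [Field K] [Ring A] [Algebra K A] {𝒜 : Gamma n → Submodule K A}
  {lo : LinearOrder (Gamma n)} {ι : Type*} [Fintype ι] [LinearOrder ι] {v : ι → Gamma n}
  {D : Matrix ι ι A → A}

lemma map_mul (hD : DetAxioms 𝒜 lo v D) {X Y : Matrix ι ι A} (hX : Mdeg0 𝒜 v X)
    (hY : Mdeg0 𝒜 v Y) : D (X * Y) = D X * D Y :=
  hD.2.1 X Y hX hY

lemma map_diagonal_const (hD : DetAxioms 𝒜 lo v D) {u : A} (hu : u ∈ 𝒜 0) :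
    D (Matrix.diagonal fun _ => u) = u ^ Fintype.card ι := by
  rw [hD.2.2.1 _ (Mdeg0_diagonal fun _ => hu) fun α β h =>
    Matrix.diagonal_apply_ne _ (ne_of_apply_ne v h), detProd_diagonal_const]

variable [GradedAlgebra 𝒜]

lemma map_one (hD : DetAxioms 𝒜 lo v D) : D 1 = 1 := by
  simpa using hD.map_diagonal_const (SetLike.one_mem_graded 𝒜)

lemma pow_card_mul_eq_of_twist_eq (hD : DetAxioms 𝒜 lo v D) (hcomm : GradedComm 𝒜)
    {γ : Gamma n} {q q' : A} (hq : q ∈ 𝒜 γ) (hq' : q' ∈ 𝒜 γ) (hq'u : IsUnit q')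
    {X₀ X₀' : Matrix ι ι A} (hX₀ : Mdeg0 𝒜 v X₀) (h : twist v γ q X₀ = twist v γ q' X₀') :
    q ^ Fintype.card ι * D X₀ = q' ^ Fintype.card ι * D X₀' := by
  obtain ⟨u, hu⟩ : ∃ u, q' * u = q := ⟨↑hq'u.unit⁻¹ * q, hq'u.unit.mul_inv_cancel_left q⟩
  have hu0 : u ∈ 𝒜 0 := SetLike.mem_of_isUnit_mul_mem hq' hq'u (by rwa [add_zero, hu])
  have hX₀' : X₀' = Matrix.diagonal (fun _ => u) * X₀ := by
    ext α β
    apply hq'u.mul_left_cancel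
    rw [Matrix.diagonal_mul, ← mul_assoc, hu, mul_apply_eq_of_twist_eq v h]
  rw [hX₀', hD.map_mul (Mdeg0_diagonal fun _ => hu0) hX₀, hD.map_diagonal_const hu0,
    ← mul_assoc, ← (hcomm.commute_of_mem_zero hu0 hq').symm.mul_pow, hu]

lemma pow_card_mul_eq_of_twist_mul_eq (hD : DetAxioms 𝒜 lo v D) (hcomm : GradedComm 𝒜)
    (hcard : Even ((Fintype.card ι).choose 2)) {γ δ : Gamma n} {q q' r : A} (hq : q ∈ 𝒜 γ)
    (hqu : IsUnit q) (hq' : q' ∈ 𝒜 δ) (hq'u : IsUnit q') (hr : r ∈ 𝒜 (γ + δ))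
    {X₀ Y₀ Z₀ : Matrix ι ι A} (hX₀ : Mdeg0 𝒜 v X₀) (hY₀ : Mdeg0 𝒜 v Y₀) (hZ₀ : Mdeg0 𝒜 v Z₀)
    (h : twist v γ q X₀ * twist v δ q' Y₀ = twist v (γ + δ) r Z₀) :
    r ^ Fintype.card ι * D Z₀ = (q ^ Fintype.card ι * D X₀) * (q' ^ Fintype.card ι * D Y₀) := by
  rw [twist_mul v hcomm q hq' hX₀] at h
  rw [hD.pow_card_mul_eq_of_twist_eq hcomm hr (SetLike.mul_mem_graded hq hq') (hqu.mul hq'u) hZ₀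
      h.symm, hcomm.mul_pow hq hq', gsign_pow_of_even γ δ hcard, one_smul, hD.map_mul hX₀ hY₀,
    mul_assoc, ← mul_assoc (q' ^ _), ← ((hcomm.commute_of_mem_zero (hD.1 X₀ hX₀) hq').pow_right _).eq]
  noncomm_ring

end DetAxioms

theorem graded_det_extension_general {n N : ℕ} (hn : 3 ≤ n)
    {K A : Type*} [Field K] [CharZero K] [Ring A] [Algebra K A] [Nontrivial A]
    (𝒜 : Gamma n → Submodule K A) [GradedAlgebra 𝒜] (hcomm : GradedComm 𝒜)
    (w : Fin N → Gamma n)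
    (hinv : ∀ γ : Gamma n, GammaEven γ → ∃ a ∈ 𝒜 γ, IsUnit a)
    (lo : LinearOrder (Gamma n))
    (D : Matrix (Fin N) (Fin N) A → A) (hD : DetAxioms 𝒜 lo w D) :
    -- (a) well-definedness
    (∀ γ : Gamma n, GammaEven γ → ∀ q q' : A, q ∈ 𝒜 γ → IsUnit q → q' ∈ 𝒜 γ → IsUnit q' →
      ∀ X₀ X₀' : Matrix (Fin N) (Fin N) A, Mdeg0 𝒜 w X₀ → Mdeg0 𝒜 w X₀' →
        twist w γ q X₀ = twist w γ q' X₀' →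
        q ^ N * D X₀ = q' ^ N * D X₀') ∧
    -- (b) multiplicativity iff N % 4 = 0 or 1
    ((∀ γ δ : Gamma n, GammaEven γ → GammaEven δ →
      ∀ q q' r : A, q ∈ 𝒜 γ → IsUnit q → q' ∈ 𝒜 δ → IsUnit q' →
        r ∈ 𝒜 (γ + δ) → IsUnit r →
      ∀ X₀ Y₀ Z₀ : Matrix (Fin N) (Fin N) A,
        Mdeg0 𝒜 w X₀ → Mdeg0 𝒜 w Y₀ → Mdeg0 𝒜 w Z₀ →
        twist w γ q X₀ * twist w δ q' Y₀ = twist w (γ + δ) r Z₀ →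
        r ^ N * D Z₀ = (q ^ N * D X₀) * (q' ^ N * D Y₀)) ↔
      (N % 4 = 0 ∨ N % 4 = 1)) := by
  refine ⟨fun γ _ q q' hq _ hq' hq'u X₀ _ hX₀ _ h => ?_, fun hmult => ?_, fun hN => ?_⟩
  · simpa using hD.pow_card_mul_eq_of_twist_eq hcomm hq hq' hq'u hX₀ h
  · obtain ⟨γ, δ, hγ, hδ, hγδ⟩ := exists_gammaEven_gpair_eq_one hn
    obtain ⟨q, hq, hqu⟩ := hinv γ hγ
    obtain ⟨q', hq', hq'u⟩ := hinv δ hδ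
    have hpow : (q * q') ^ N = q ^ N * q' ^ N := by
      simpa [hD.map_one] using hmult γ δ hγ hδ q q' (q * q') hq hqu hq' hq'u
        (SetLike.mul_mem_graded hq hq') (hqu.mul hq'u) 1 1 1 Mdeg0_one Mdeg0_one Mdeg0_one
        (by rw [twist_mul w hcomm q hq' Mdeg0_one, Matrix.one_mul])
    have hanti : q' * q = -(q * q') := by
      rw [hcomm γ δ q q' hq hq', gsign_of_gpair_eq_one hγδ, neg_one_zsmul]
    have : CharZero A := charZero_of_injective_algebraMap (algebraMap K A).injective
    exact (Nat.even_choose_two_iff N).1 (even_choose_two_of_mul_pow_eq hqu hq'u hanti hpow)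
  · intro γ δ _ _ q q' r hq hqu hq' hq'u hr _ X₀ Y₀ Z₀ hX₀ hY₀ hZ₀ h
    have hcard : Even ((Fintype.card (Fin N)).choose 2) := by
      rw [Fintype.card_fin]; exact (Nat.even_choose_two_iff N).2 hN
    simpa using hD.pow_card_mul_eq_of_twist_mul_eq hcomm hcard hq hqu hq' hq'u hr hX₀ hY₀ hZ₀ h

/-- **Extension of the graded determinant to nonzero even degrees** (Proposition).
(a) The value `q ^ N * D(X₀)` does not depend on the factorization `X = q • X₀` of a
homogeneous matrix of even degree `γ` into an invertible `q ∈ 𝒜 γ` and `X₀ ∈ M⁰(w)`.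
(b) The resulting extended determinant is multiplicative if and only if
`N % 4 = 0` or `N % 4 = 1`. -/
theorem graded_det_extension {n N : ℕ} (hn : 3 ≤ n) (hN : 1 ≤ N)
    {K A : Type*} [Field K] [CharZero K] [Ring A] [Algebra K A] [Nontrivial A]
    (𝒜 : Gamma n → Submodule K A) [GradedAlgebra 𝒜] (hcomm : GradedComm 𝒜)
    (w : Fin N → Gamma n) (hw : ∀ α, GammaEven (w α))
    (hinv : ∀ γ : Gamma n, GammaEven γ → ∃ a ∈ 𝒜 γ, IsUnit a)
    (lo : LinearOrder (Gamma n))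
    (D : Matrix (Fin N) (Fin N) A → A) (hD : DetAxioms 𝒜 lo w D) :
    -- (a) well-definedness
    (∀ γ : Gamma n, GammaEven γ → ∀ q q' : A, q ∈ 𝒜 γ → IsUnit q → q' ∈ 𝒜 γ → IsUnit q' →
      ∀ X₀ X₀' : Matrix (Fin N) (Fin N) A, Mdeg0 𝒜 w X₀ → Mdeg0 𝒜 w X₀' →
        twist w γ q X₀ = twist w γ q' X₀' →
        q ^ N * D X₀ = q' ^ N * D X₀') ∧
    -- (b) multiplicativity iff N % 4 = 0 or 1
    ((∀ γ δ : Gamma n, GammaEven γ → GammaEven δ →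
      ∀ q q' r : A, q ∈ 𝒜 γ → IsUnit q → q' ∈ 𝒜 δ → IsUnit q' →
        r ∈ 𝒜 (γ + δ) → IsUnit r →
      ∀ X₀ Y₀ Z₀ : Matrix (Fin N) (Fin N) A,
        Mdeg0 𝒜 w X₀ → Mdeg0 𝒜 w Y₀ → Mdeg0 𝒜 w Z₀ →
        twist w γ q X₀ * twist w δ q' Y₀ = twist w (γ + δ) r Z₀ →
        r ^ N * D Z₀ = (q ^ N * D X₀) * (q' ^ N * D Y₀)) ↔
      (N % 4 = 0 ∨ N % 4 = 1)) :=
  graded_det_extension_general hn 𝒜 hcomm w hinv lo D hD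
end

section
/- Differential equation for the graded determinant (Lemma): Take K = ℝ and assume A is finite-dimensional over ℝ, equipped with a norm making it a normed ℝ-algebra. Assume all values of w : Fin N → Γ are even, and let D : M⁰(w) → 𝒜 0 satisfy the graded-determinant axioms and be ℝ-linear in each row (additive in each row, and replacing a row by a real scalar multiple multiplies the value by that scalar). Let X, M : ℝ → Matrix (Fin N) (Fin N) A be such that X t ∈ M⁰(w) and M t ∈ M⁰(w) for all t, and such that for all t, α, β the entry function s ↦ X s α β has at t the derivative ((M t) * (X t)) α β. Then for every t the function s ↦ (D (X s) : A) has at t the derivative (∑ α, M t α α) * D (X t); note that for purely even degree-zero matrices the graded trace coincides with the ordinary trace ∑ α, M t α α. -/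
open Matrix

/-- `D` is ℝ-linear in each row of matrices satisfying `P`: additive in each row, and
replacing a row by a real scalar multiple multiplies the value by that scalar. -/
def RowLinear {ι : Type*} {A : Type*} [Ring A] [Module ℝ A]
    (P : Matrix ι ι A → Prop) (D : Matrix ι ι A → A) : Prop :=
  (∀ (X X' X'' : Matrix ι ι A) (α₀ : ι), P X → P X' → P X'' →
    (∀ α β, α ≠ α₀ → X α β = X' α β ∧ X α β = X'' α β) →
    (∀ β, X α₀ β = X' α₀ β + X'' α₀ β) →
    D X = D X' + D X'') ∧
  (∀ (c : ℝ) (X X' : Matrix ι ι A) (α₀ : ι), P X → P X' →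
    (∀ α β, α ≠ α₀ → X' α β = X α β) →
    (∀ β, X' α₀ β = c • X α₀ β) →
    D X' = c • D X)

/-!
`D` is only defined (and row-linear) on `M⁰(w)`, so first extend it to all matrices by
projecting every entry onto its prescribed graded component: this gives a multilinear function
of the rows, continuous because `A` is finite-dimensional. The chain rule then expresses the
derivative as `∑ i, D(X with row i replaced by row i of M X)`, and row `i` of `M X` is
`∑ j, M i j • (row j of X)`. By row additivity each summand with `j ≠ i` is
`D((1 + M i j eᵢⱼ) X) - D(X) = 0`, the elementary matrix having graded determinant `1` by the
normalisation axioms, while the summand `j = i` is `D(diag(…, M i i, …) X) = M i i * D(X)` by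
multiplicativity. Summing gives `tr(M) * D(X)`.
-/

theorem MultilinearMap.continuous_of_finiteDimensional {𝕜 ι F : Type*}
    [NontriviallyNormedField 𝕜] [CompleteSpace 𝕜] [Fintype ι] {E : ι → Type*}
    [∀ i, NormedAddCommGroup (E i)] [∀ i, NormedSpace 𝕜 (E i)]
    [∀ i, FiniteDimensional 𝕜 (E i)] [NormedAddCommGroup F] [NormedSpace 𝕜 F]
    (f : MultilinearMap 𝕜 E F) : Continuous f := by
  classical
  let b := fun i => Module.finBasis 𝕜 (E i)
  have expand : ⇑f = fun v => ∑ r : ∀ i, Fin (Module.finrank 𝕜 (E i)),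
      (∏ i, (b i).repr (v i) (r i)) • f fun i => b i (r i) := by
    ext v
    conv_lhs => rw [← funext fun i => (b i).sum_repr (v i), f.map_sum]
    exact Finset.sum_congr rfl fun r _ => f.map_smul_univ _ _
  rw [expand]
  refine continuous_finsetSum _ fun r _ => .smul ?_ continuous_const
  exact continuous_finsetProd _ fun i _ =>
    ((b i).coord (r i)).continuous_of_finiteDimensional.comp (continuous_apply i)

theorem HasDerivAt.continuousMultilinearMap_comp {𝕜 ι F : Type*}
    [NontriviallyNormedField 𝕜] [Fintype ι] [DecidableEq ι] {E : ι → Type*}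
    [∀ i, NormedAddCommGroup (E i)] [∀ i, NormedSpace 𝕜 (E i)]
    [NormedAddCommGroup F] [NormedSpace 𝕜 F]
    (f : ContinuousMultilinearMap 𝕜 E F) {g : 𝕜 → ∀ i, E i} {g' : ∀ i, E i} {x : 𝕜}
    (hg : HasDerivAt g g' x) :
    HasDerivAt (fun s => f (g s)) (∑ i, f (Function.update (g x) i (g' i))) x := by
  simpa [ContinuousMultilinearMap.linearDeriv_apply, Function.comp_def] using
    (f.hasFDerivAt (g x)).comp_hasDerivAt x hg

theorem List.prod_map_eq_of_ne_eq_one {ι M : Type*} [Monoid M] {l : List ι} {a : ι}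
    {f : ι → M} (hl : l.Nodup) (ha : a ∈ l) (h : ∀ x ∈ l, x ≠ a → f x = 1) :
    (l.map f).prod = f a := by
  obtain ⟨s, t, rfl⟩ := List.append_of_mem ha
  obtain ⟨has, hat⟩ : a ∉ s ∧ a ∉ t := by
    simpa using (List.nodup_cons.mp (List.nodup_middle.mp hl)).1
  have hs : (s.map f).prod = 1 := List.prod_eq_one <| by
    simpa using fun x hx => h x (by simp [hx]) (ne_of_mem_of_not_mem hx has)
  have ht : (t.map f).prod = 1 := List.prod_eq_one <| by
    simpa using fun x hx => h x (by simp [hx]) (ne_of_mem_of_not_mem hx hat)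
  simp [hs, ht]

section listDet

variable {ι A : Type*} [Fintype ι] [LinearOrder ι] [Ring A]

def offDiagSupport (X : Matrix ι ι A) : Set (ι × ι) := {p | p.1 ≠ p.2 ∧ X p.1 p.2 ≠ 0}

/-- If `σ ≠ 1` then both `(σ a, a)` and `(σ (σ a), σ a)` are off-diagonal for any `a` moved
by `σ`, so at most one nonzero off-diagonal entry leaves only the identity term. -/
theorem listDet_eq_prod_diag {X : Matrix ι ι A} (hX : (offDiagSupport X).Subsingleton) :
    listDet X = ((Finset.sort Finset.univ (· ≤ ·)).map fun i => X i i).prod := by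
  rw [listDet, Finset.sum_eq_single (1 : Equiv.Perm ι) _ (by simp)]
  · simp
  intro σ _ hσ
  obtain ⟨a, ha⟩ : ∃ a, σ a ≠ a := by
    by_contra! h
    exact hσ (Equiv.ext h)
  suffices ∃ b, X (σ b) b = 0 by
    obtain ⟨b, hb⟩ := this
    exact smul_eq_zero_of_right _ (List.prod_eq_zero (List.mem_map.2 ⟨b, by simp, hb⟩))
  by_contra! h
  have hσa : σ (σ a) ≠ σ a := fun e => ha (σ.injective e)
  have := hX (show (σ a, a) ∈ offDiagSupport X from ⟨ha, h a⟩)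
    (show (σ (σ a), σ a) ∈ offDiagSupport X from ⟨hσa, h (σ a)⟩)
  exact ha (Prod.ext_iff.mp this).2.symm

end listDet

theorem detProd_eq_of_offDiagSupport_subsingleton {n : ℕ} (lo : LinearOrder (Gamma n))
    {ι A : Type*} [Fintype ι] [LinearOrder ι] [Ring A] (v : ι → Gamma n)
    {X : Matrix ι ι A} (hX : (offDiagSupport X).Subsingleton) (i₀ : ι)
    (hdiag : ∀ a, a ≠ i₀ → X a a = 1) :
    detProd lo v X = X i₀ i₀ := by
  let := lo
  have hblock : ∀ γ, listDet (Matrix.of fun a b : {α // v α = γ} => X a.1 b.1) =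
      ((Finset.sort Finset.univ (· ≤ ·)).map fun a : {α // v α = γ} => X a.1 a.1).prod := by
    intro γ
    refine listDet_eq_prod_diag ((hX.preimage (f := fun p => (p.1.1, p.2.1)) ?_).anti ?_)
    · intro p q h
      simp only [Prod.mk.injEq] at h
      exact Prod.ext (Subtype.ext h.1) (Subtype.ext h.2)
    · exact fun p hp => ⟨fun h => hp.1 (Subtype.ext h), hp.2⟩
  rw [detProd, List.prod_map_eq_of_ne_eq_one (a := v i₀) (Finset.sort_nodup _ _) (by simp)]
  · rw [hblock]
    refine List.prod_map_eq_of_ne_eq_one (a := (⟨i₀, rfl⟩ : {α // v α = v i₀}))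
      (Finset.sort_nodup _ _) (by simp) fun a _ ha => hdiag a fun h => ha (Subtype.ext h)
  · intro γ _ hγ
    rw [hblock]
    refine List.prod_eq_one fun x hx => ?_
    obtain ⟨a, -, rfl⟩ := List.mem_map.1 hx
    exact hdiag a fun h => hγ (h ▸ a.2.symm)

theorem Gamma.add_self {n : ℕ} (γ : Gamma n) : γ + γ = 0 :=
  funext fun i => CharTwo.add_self_eq_zero (γ i)

section Mdeg0

variable {n : ℕ} {K A ι : Type*} [Field K] [Ring A] [Algebra K A]
  {𝒜 : Gamma n → Submodule K A} {w : ι → Gamma n}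

theorem mul_mem_graded_add_cancel [SetLike.GradedMonoid 𝒜] {a b c : Gamma n} {x y : A}
    (hx : x ∈ 𝒜 (a + c)) (hy : y ∈ 𝒜 (c + b)) : x * y ∈ 𝒜 (a + b) := by
  have hxy := SetLike.mul_mem_graded hx hy
  rwa [show a + c + (c + b) = a + b + (c + c) by abel, Gamma.add_self, add_zero] at hxy

theorem Mdeg0.add {X Y : Matrix ι ι A} (hX : Mdeg0 𝒜 w X) (hY : Mdeg0 𝒜 w Y) :
    Mdeg0 𝒜 w (X + Y) :=
  fun α β => Submodule.add_mem _ (hX α β) (hY α β)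

theorem Mdeg0.updateRow [DecidableEq ι] {Y : Matrix ι ι A} (hY : Mdeg0 𝒜 w Y) {i : ι}
    {v : ι → A} (hv : ∀ β, v β ∈ 𝒜 (w i + w β)) : Mdeg0 𝒜 w (Y.updateRow i v) := by
  intro α β
  rcases eq_or_ne α i with rfl | hα
  · simpa using hv β
  · simpa [updateRow_ne hα] using hY α β

theorem mdeg0_diagonal [DecidableEq ι] {d : ι → A} (hd : ∀ α, d α ∈ 𝒜 0) :
    Mdeg0 𝒜 w (diagonal d) := by
  intro α β
  rcases eq_or_ne α β with rfl | hαβ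
  · simpa [Gamma.add_self] using hd α
  · simp [hαβ]

theorem mdeg0_single [DecidableEq ι] {i j : ι} {c : A} (hc : c ∈ 𝒜 (w i + w j)) :
    Mdeg0 𝒜 w (single i j c) := by
  intro α β
  by_cases h : i = α ∧ j = β
  · obtain ⟨rfl, rfl⟩ := h
    simpa using hc
  · simp [h]

theorem mdeg0_one [DecidableEq ι] [SetLike.GradedMonoid 𝒜] : Mdeg0 𝒜 w (1 : Matrix ι ι A) := by
  rw [← diagonal_one]
  exact mdeg0_diagonal fun _ => SetLike.one_mem_graded 𝒜

theorem mdeg0_diagonal_update_one [DecidableEq ι] [SetLike.GradedMonoid 𝒜] (i : ι) {c : A}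
    (hc : c ∈ 𝒜 0) : Mdeg0 𝒜 w (diagonal (Function.update 1 i c)) := by
  refine mdeg0_diagonal fun α => ?_
  rcases eq_or_ne α i with rfl | hα
  · simpa using hc
  · simpa [hα] using SetLike.one_mem_graded 𝒜

end Mdeg0

namespace DetAxioms

variable {n : ℕ} {K A ι : Type*} [Field K] [Ring A] [Algebra K A]
  {𝒜 : Gamma n → Submodule K A} [SetLike.GradedMonoid 𝒜] {lo : LinearOrder (Gamma n)}
  [Fintype ι] [LinearOrder ι] {w : ι → Gamma n} {D : Matrix ι ι A → A}

theorem map_diagonal_update_one (hD : DetAxioms 𝒜 lo w D) (i : ι) {c : A} (hc : c ∈ 𝒜 0) :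
    D (diagonal (Function.update 1 i c)) = c := by
  rw [hD.2.2.1 _ (mdeg0_diagonal_update_one i hc) fun α β hw =>
    diagonal_apply_ne _ fun h => hw (h ▸ rfl)]
  refine (detProd_eq_of_offDiagSupport_subsingleton lo w ?_ i ?_).trans (by simp)
  · exact Set.subsingleton_empty.anti fun p hp => hp.2 (diagonal_apply_ne _ hp.1)
  · intro a ha
    simp [ha]

theorem map_updateRow_mul_self (hD : DetAxioms 𝒜 lo w D) {Y : Matrix ι ι A}
    (hY : Mdeg0 𝒜 w Y) (i : ι) {c : A} (hc : c ∈ 𝒜 0) :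
    D (Y.updateRow i fun β => c * Y i β) = c * D Y := by
  have hrow : Y.updateRow i (fun β => c * Y i β) = diagonal (Function.update 1 i c) * Y := by
    ext α β
    rcases eq_or_ne α i with rfl | hα
    · simp
    · simp [hα]
  rw [hrow, hD.2.1 _ _ (mdeg0_diagonal_update_one i hc) hY, hD.map_diagonal_update_one i hc]

theorem map_one_add_single (hD : DetAxioms 𝒜 lo w D) {i j : ι} (hij : i ≠ j) {c : A}
    (hc : c ∈ 𝒜 (w i + w j)) : D (1 + single i j c) = 1 := by
  let := lo
  have hmem : Mdeg0 𝒜 w (1 + single i j c) := mdeg0_one.add (mdeg0_single hc)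
  have hdiag (α : ι) : (1 + single i j c) α α = 1 := by
    simp [single_apply_of_ne i j c α α (by rintro ⟨rfl, rfl⟩; exact hij rfl)]
  have hoff {α β : ι} (hαβ : α ≠ β) (hne : (α, β) ≠ (i, j)) : (1 + single i j c) α β = 0 := by
    simp [one_apply_ne hαβ, single_apply_of_ne i j c α β (by rintro ⟨rfl, rfl⟩; exact hne rfl)]
  rcases eq_or_ne (w i) (w j) with hw | hw
  · rw [hD.2.2.1 _ hmem fun α β hw' =>
      hoff (by rintro rfl; exact hw' rfl) fun e => by cases e; exact hw' hw]
    refine (detProd_eq_of_offDiagSupport_subsingleton lo w ?_ i fun a _ => hdiag a).trans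
      (hdiag i)
    refine Set.subsingleton_singleton (a := (i, j)) |>.anti fun p hp => ?_
    by_contra h
    exact hp.2 (hoff hp.1 h)
  · refine hD.2.2.2 _ hmem (fun α β hαβ => ?_) ?_
    · split_ifs with h
      · exact h ▸ hdiag α
      · exact hoff h fun e => by cases e; exact hw hαβ
    rcases hw.lt_or_gt with hlt | hlt
    · exact .inr fun α β h => hoff (by rintro rfl; exact lt_irrefl _ h)
        fun e => by cases e; exact lt_asymm hlt h
    · exact .inl fun α β h => hoff (by rintro rfl; exact lt_irrefl _ h)
        fun e => by cases e; exact lt_asymm hlt h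

end DetAxioms

theorem RowLinear.map_updateRow_add {ι A : Type*} [DecidableEq ι] [Ring A] [Module ℝ A]
    {P : Matrix ι ι A → Prop} {D : Matrix ι ι A → A} (hD : RowLinear P D)
    (Y : Matrix ι ι A) (i : ι) {u v : ι → A} (huv : P (Y.updateRow i (u + v)))
    (hu : P (Y.updateRow i u)) (hv : P (Y.updateRow i v)) :
    D (Y.updateRow i (u + v)) = D (Y.updateRow i u) + D (Y.updateRow i v) :=
  hD.1 _ _ _ i huv hu hv (fun α β hα => by simp [updateRow_ne hα]) (by simp)

section RowLinear

variable {n : ℕ} {A ι : Type*} [Ring A] [Algebra ℝ A] {𝒜 : Gamma n → Submodule ℝ A}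
  [SetLike.GradedMonoid 𝒜] {lo : LinearOrder (Gamma n)} [Fintype ι] [LinearOrder ι]
  {w : ι → Gamma n} {D : Matrix ι ι A → A}

/-- Adding `c` times row `j` to row `i` is left multiplication by `1 + single i j c`, which has
graded determinant `1`. -/
theorem DetAxioms.map_updateRow_mul_of_ne (hD : DetAxioms 𝒜 lo w D)
    (hDlin : RowLinear (Mdeg0 𝒜 w) D) {Y : Matrix ι ι A} (hY : Mdeg0 𝒜 w Y) {i j : ι}
    (hij : i ≠ j) {c : A} (hc : c ∈ 𝒜 (w i + w j)) :
    D (Y.updateRow i fun β => c * Y j β) = 0 := by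
  have hrow (β : ι) : c * Y j β ∈ 𝒜 (w i + w β) := mul_mem_graded_add_cancel hc (hY j β)
  have hT : (1 + single i j c) * Y = Y.updateRow i (Y i + fun β => c * Y j β) := by
    ext α β
    rcases eq_or_ne α i with rfl | hα
    · simp [add_mul]
    · simp [add_mul, hα, single_mul_apply_of_ne]
  have hsplit := hDlin.map_updateRow_add Y i
    (hY.updateRow fun β => Submodule.add_mem _ (hY i β) (hrow β))
    (by rwa [updateRow_eq_self]) (hY.updateRow hrow)
  rwa [← hT, updateRow_eq_self, hD.2.1 _ _ (mdeg0_one.add (mdeg0_single hc)) hY,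
    hD.map_one_add_single hij hc, one_mul, left_eq_add] at hsplit

end RowLinear

section RowMultilinear

variable {n : ℕ} {A ι : Type*} [Ring A] [Algebra ℝ A] {𝒜 : Gamma n → Submodule ℝ A}
  [GradedAlgebra 𝒜] {w : ι → Gamma n} {D : Matrix ι ι A → A}

variable (𝒜 w) in
def degreeZeroPart (R : ι → ι → A) : Matrix ι ι A :=
  Matrix.of fun α β => (DirectSum.decompose 𝒜 (R α β) (w α + w β) : A)

theorem mdeg0_degreeZeroPart (R : ι → ι → A) : Mdeg0 𝒜 w (degreeZeroPart 𝒜 w R) :=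
  fun _ _ => SetLike.coe_mem _

theorem degreeZeroPart_of_mdeg0 {Y : Matrix ι ι A} (hY : Mdeg0 𝒜 w Y) :
    degreeZeroPart 𝒜 w Y = Y := by
  ext α β
  exact DirectSum.decompose_of_mem_same 𝒜 (hY α β)

def rowMultilinear (hDlin : RowLinear (Mdeg0 𝒜 w) D) :
    MultilinearMap ℝ (fun _ : ι => ι → A) A where
  toFun R := D (degreeZeroPart 𝒜 w R)
  map_update_add' R i x y := by
    refine hDlin.1 _ _ _ i (mdeg0_degreeZeroPart _) (mdeg0_degreeZeroPart _)
      (mdeg0_degreeZeroPart _) (fun α β hα => ?_) fun β => ?_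
    · simp [degreeZeroPart, Function.update_of_ne hα]
    · simp [degreeZeroPart]
  map_update_smul' R i c x := by
    refine hDlin.2 c _ _ i (mdeg0_degreeZeroPart _) (mdeg0_degreeZeroPart _)
      (fun α β hα => ?_) fun β => ?_
    · simp [degreeZeroPart, Function.update_of_ne hα]
    · simp [degreeZeroPart, DirectSum.smul_apply]

theorem rowMultilinear_apply_of_mdeg0 (hDlin : RowLinear (Mdeg0 𝒜 w) D) {Y : Matrix ι ι A}
    (hY : Mdeg0 𝒜 w Y) : rowMultilinear hDlin Y = D Y :=
  congrArg D (degreeZeroPart_of_mdeg0 hY)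

theorem rowMultilinear_update_mul_row [Fintype ι] [LinearOrder ι]
    {lo : LinearOrder (Gamma n)} (hD : DetAxioms 𝒜 lo w D) (hDlin : RowLinear (Mdeg0 𝒜 w) D)
    {Y M : Matrix ι ι A} (hY : Mdeg0 𝒜 w Y) (hM : Mdeg0 𝒜 w M) (i : ι) :
    rowMultilinear hDlin (Function.update Y i ((M * Y) i)) = M i i * D Y := by
  have hrow : (M * Y) i = ∑ j, fun β => M i j * Y j β := by
    ext β
    simp [mul_apply]
  have hterm (j : ι) : rowMultilinear hDlin (Function.update Y i fun β => M i j * Y j β) =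
      D (Y.updateRow i fun β => M i j * Y j β) :=
    rowMultilinear_apply_of_mdeg0 hDlin
      (hY.updateRow fun β => mul_mem_graded_add_cancel (hM i j) (hY j β))
  rw [hrow]
  refine ((rowMultilinear hDlin).map_update_sum Finset.univ i _ Y).trans ?_
  rw [Finset.sum_eq_single i, hterm,
    hD.map_updateRow_mul_self hY i (by simpa [Gamma.add_self] using hM i i)]
  · exact fun j _ hji => (hterm j).trans (hD.map_updateRow_mul_of_ne hDlin hY hji.symm (hM i j))
  · simp

end RowMultilinear

theorem graded_det_ode_general {n N : ℕ}
    {A : Type*} [NormedRing A] [NormedAlgebra ℝ A] [FiniteDimensional ℝ A]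
    (𝒜 : Gamma n → Submodule ℝ A) [GradedAlgebra 𝒜]
    (w : Fin N → Gamma n)
    (lo : LinearOrder (Gamma n))
    (D : Matrix (Fin N) (Fin N) A → A) (hD : DetAxioms 𝒜 lo w D)
    (hDlin : RowLinear (Mdeg0 𝒜 w) D)
    (X M : ℝ → Matrix (Fin N) (Fin N) A)
    (hX : ∀ t, Mdeg0 𝒜 w (X t)) (hM : ∀ t, Mdeg0 𝒜 w (M t))
    (hder : ∀ (t : ℝ) (α β : Fin N),
      HasDerivAt (fun s => X s α β) ((M t * X t) α β) t) :
    ∀ t : ℝ, HasDerivAt (fun s => D (X s)) ((∑ α, M t α α) * D (X t)) t := by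
  intro t
  let Dc : ContinuousMultilinearMap ℝ (fun _ : Fin N => Fin N → A) A :=
    ⟨rowMultilinear hDlin, (rowMultilinear hDlin).continuous_of_finiteDimensional⟩
  have hXt : HasDerivAt X (M t * X t) t :=
    hasDerivAt_pi.2 fun α => hasDerivAt_pi.2 (hder t α)
  refine ((HasDerivAt.continuousMultilinearMap_comp Dc hXt).congr_deriv ?_).congr_of_eventuallyEq
    (.of_forall fun s => (rowMultilinear_apply_of_mdeg0 hDlin (hX s)).symm)
  rw [Finset.sum_mul]
  exact Finset.sum_congr rfl fun i _ => rowMultilinear_update_mul_row hD hDlin (hX t) (hM t) i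

/-- **Differential equation for the graded determinant** (Lemma).
If `dX/dt = M X` with `X(t), M(t) ∈ M⁰(w)` (all weights even) and `D` is a graded
determinant which is ℝ-linear in each row, then `d/dt D(X) = tr(M) * D(X)`, where for
purely even degree-zero matrices the graded trace is the ordinary trace `∑ α, M α α`. -/
theorem graded_det_ode {n N : ℕ} (hn : 1 ≤ n) (hN : 1 ≤ N)
    {A : Type*} [NormedRing A] [NormedAlgebra ℝ A] [FiniteDimensional ℝ A]
    (𝒜 : Gamma n → Submodule ℝ A) [GradedAlgebra 𝒜] (hcomm : GradedComm 𝒜)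
    (w : Fin N → Gamma n) (hw : ∀ α, GammaEven (w α))
    (lo : LinearOrder (Gamma n))
    (D : Matrix (Fin N) (Fin N) A → A) (hD : DetAxioms 𝒜 lo w D)
    (hDlin : RowLinear (Mdeg0 𝒜 w) D)
    (X M : ℝ → Matrix (Fin N) (Fin N) A)
    (hX : ∀ t, Mdeg0 𝒜 w (X t)) (hM : ∀ t, Mdeg0 𝒜 w (M t))
    (hder : ∀ (t : ℝ) (α β : Fin N),
      HasDerivAt (fun s => X s α β) ((M t * X t) α β) t) :
    ∀ t : ℝ, HasDerivAt (fun s => D (X s)) ((∑ α, M t α α) * D (X t)) t :=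
  graded_det_ode_general 𝒜 w lo D hD hDlin X M hX hM hder
end
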